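/- arXiv:2012.15347 — 5 statements merged into one kernel-verified Lean document; each statement's English description precedes it below -/
import Mathlib

section
/- Every weakly transitive frame (W,R) (i.e., satisfying xRzRy ⇒ xRy ∨ x=y) is isomorphic to a sum over the skeleton of (W, R*) of frames (W_i, R_i) each satisfying x ≠ y ⇒ x R_i y, where R* is the reflexive transitive closure of R. -/
/-- The equivalence `R* ∩ (R*)⁻¹` where `R*` is the reflexive transitive closure. -/
def starEquiv {W : Type*} (R : W → W → Prop) : W → W → Prop :=
  fun x y => Relation.ReflTransGen R x y ∧ Relation.ReflTransGen R y x

/-- The skeleton relation on the quotient of `(W, R*)`. -/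
def starSkelLe {W : Type*} (R : W → W → Prop) (C D : Quot (starEquiv R)) : Prop :=
  ∃ w v : W, Quot.mk (starEquiv R) w = C ∧ Quot.mk (starEquiv R) v = D ∧
    Relation.ReflTransGen R w v

/-- Domain of a sum of frames indexed by the skeleton of `(W, R*)`. -/
def starSum {W : Type*} (R : W → W → Prop) : Type _ :=
  Σ C : Quot (starEquiv R), {w : W // Quot.mk (starEquiv R) w = C}

/-- The sum relation of the family of component relations `Ri` over the skeleton. -/
def starSumRel {W : Type*} (R : W → W → Prop)
    (Ri : ∀ C : Quot (starEquiv R),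
      {w : W // Quot.mk (starEquiv R) w = C} → {w : W // Quot.mk (starEquiv R) w = C} → Prop)
    (x y : starSum R) : Prop :=
  (∃ h : x.1 = y.1, Ri y.1 (h ▸ x.2) y.2) ∨ (x.1 ≠ y.1 ∧ starSkelLe R x.1 y.1)

lemma starEquiv_equivalence {W : Type*} (R : W → W → Prop) : Equivalence (starEquiv R) :=
  ⟨fun _ => ⟨.refl, .refl⟩, fun ⟨a, b⟩ => ⟨b, a⟩,
   fun ⟨a, b⟩ ⟨c, d⟩ => ⟨a.trans c, d.trans b⟩⟩

lemma cast_val {W : Type*} {R : W → W → Prop} {C D : Quot (starEquiv R)} (h : C = D)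
    (x : {w : W // Quot.mk (starEquiv R) w = C}) :
    ((h ▸ x : {w : W // Quot.mk (starEquiv R) w = D}) : W) = (x : W) := by
  cases h; rfl

lemma starEquiv_of_mk_eq {W : Type*} {R : W → W → Prop} {a b : W}
    (h : Quot.mk (starEquiv R) a = Quot.mk (starEquiv R) b) : starEquiv R a b :=
  ((starEquiv_equivalence R).eqvGen_iff).mp (Quot.eq.mp h)

lemma rel_of_star {W : Type*} {R : W → W → Prop}
    (hwt : ∀ x z y, R x z → R z y → R x y ∨ x = y) {a b : W}
    (h : Relation.ReflTransGen R a b) : R a b ∨ a = b := by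
  induction h with
  | refl => exact Or.inr rfl
  | tail h1 h2 ih =>
    rcases ih with ih | rfl
    · exact (hwt _ _ _ ih h2).imp id id
    · exact Or.inl h2

/-- Every weakly transitive frame is isomorphic to a sum over the skeleton of `(W, R*)`
of frames each satisfying `x ≠ y → R_i x y`. -/
theorem stmt_1 {W : Type*} (R : W → W → Prop)
    (hwt : ∀ x z y, R x z → R z y → R x y ∨ x = y) :
    ∃ Ri : ∀ C : Quot (starEquiv R),
        {w : W // Quot.mk (starEquiv R) w = C} → {w : W // Quot.mk (starEquiv R) w = C} → Prop,
      (∀ C x y, x ≠ y → Ri C x y) ∧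
      ∃ e : starSum R ≃ W,
        ∀ x y : starSum R, starSumRel R Ri x y ↔ R (e x) (e y) := by
  refine ⟨fun C x y => R x.1 y.1, ?_, ?_⟩
  · rintro C ⟨x, hx⟩ ⟨y, hy⟩ hne
    have hxy : x ≠ y := fun h => hne (by simp [h])
    have := starEquiv_of_mk_eq (R := R) (hx.trans hy.symm)
    rcases rel_of_star hwt this.1 with h | h
    · exact h
    · exact absurd h hxy
  · refine ⟨⟨fun x => x.2.1, fun w => ⟨Quot.mk _ w, ⟨w, rfl⟩⟩, ?_, fun w => rfl⟩, ?_⟩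
    · rintro ⟨C, w, hw⟩; subst hw; rfl
    · rintro ⟨C, x⟩ ⟨D, y⟩
      constructor
      · rintro (⟨h, hr⟩ | ⟨hne, w, v, hw, hv, hst⟩)
        · rw [cast_val] at hr; exact hr
        · have h1 : Relation.ReflTransGen R x.1 w :=
            (starEquiv_of_mk_eq (x.2.trans hw.symm).symm).2
          have h2 : Relation.ReflTransGen R v y.1 :=
            (starEquiv_of_mk_eq (hv.trans y.2.symm)).1
          have : Relation.ReflTransGen R x.1 y.1 := (h1.trans hst).trans h2
          rcases rel_of_star hwt this with h | h
          · exact h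
          · exact absurd (x.2.symm.trans (h ▸ y.2)) hne
      · intro hr
        by_cases h : C = D
        · subst h
          exact Or.inl ⟨rfl, hr⟩
        · exact Or.inr ⟨h, x.1, y.1, x.2, y.2, Relation.ReflTransGen.single hr⟩
end

section
/- Let I, J be A-frames where all relations of J are irreflexive. If f : I ↠ J is a p-morphism and for every i in I there is a p-morphism g_i : F_i ↠ G_{f(i)}, then there is a p-morphism from Σ_{i∈I} F_i onto Σ_{j∈J} G_j. -/
/-- Sum of A-frames over an A-frame `(ι, S)`. -/
def sumRelA {A ι : Type*} (S : A → ι → ι → Prop) {F : ι → Type*}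
    (R : ∀ i, A → F i → F i → Prop) : A → (Σ i, F i) → (Σ i, F i) → Prop :=
  fun a x y => (∃ h : x.1 = y.1, R y.1 a (h ▸ x.2) y.2) ∨ (x.1 ≠ y.1 ∧ S a x.1 y.1)

/-- `f` is a p-morphism from the A-frame `(W, R)` onto `(W', R')`. -/
def IsPMorphA {A W W' : Type*} (R : A → W → W → Prop) (R' : A → W' → W' → Prop)
    (f : W → W') : Prop :=
  Function.Surjective f ∧
  (∀ a w v, R a w v → R' a (f w) (f v)) ∧
  (∀ a w u', R' a (f w) u' → ∃ v, R a w v ∧ f v = u')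

/-- If all relations of `J` are irreflexive, `f : I ↠ J` is a p-morphism, and each
`F_i` maps p-morphically onto `G_{f i}`, then `Σ_{i∈I} F_i ↠ Σ_{j∈J} G_j`. -/
theorem stmt_4 {A ι κ : Type*} (S : A → ι → ι → Prop) (T : A → κ → κ → Prop)
    (hT : ∀ a j, ¬ T a j j)
    {F : ι → Type*} (RF : ∀ i, A → F i → F i → Prop)
    {G : κ → Type*} (RG : ∀ j, A → G j → G j → Prop)
    (f : ι → κ) (hf : IsPMorphA S T f)
    (g : ∀ i, F i → G (f i)) (hg : ∀ i, IsPMorphA (RF i) (RG (f i)) (g i)) :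
    ∃ h : (Σ i, F i) → (Σ j, G j),
      IsPMorphA (sumRelA S RF) (sumRelA T RG) h := by
  refine ⟨fun x => ⟨f x.1, g x.1 x.2⟩, ?_, ?_, ?_⟩
  · rintro ⟨j, u⟩
    obtain ⟨i, rfl⟩ := hf.1 j
    obtain ⟨w, rfl⟩ := (hg i).1 u
    exact ⟨⟨i, w⟩, rfl⟩
  · rintro a ⟨i, w⟩ ⟨i', v⟩ (⟨h, hr⟩ | ⟨hne, hs⟩)
    · cases h
      exact Or.inl ⟨rfl, (hg i).2.1 a _ _ hr⟩
    · have hT' := hf.2.1 a _ _ hs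
      exact Or.inr ⟨fun h => hT a (f i') ((show f i = f i' from h) ▸ hT'), hT'⟩
  · rintro a ⟨i, w⟩ ⟨j', u'⟩ (⟨h, hr⟩ | ⟨hne, ht⟩)
    · dsimp at h; cases h
      obtain ⟨v, hv, rfl⟩ := (hg i).2.2 a w u' hr
      exact ⟨⟨i, v⟩, Or.inl ⟨rfl, hv⟩, rfl⟩
    · dsimp at hne ht
      obtain ⟨i', hs, rfl⟩ := hf.2.2 a i j' ht
      obtain ⟨v, rfl⟩ := (hg i').1 u'
      exact ⟨⟨i', v⟩, Or.inr ⟨fun h => hne (congrArg f (show i = i' from h)), hs⟩, rfl⟩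
end

section
/- External condition lemma for two-component sums: for models M₀, M₁, a formula φ, a condition Γ, and a modality a, the set of subformulas of φ satisfiable under Γ in M₀ +ᵃ M₁ equals the union of (i) the set of subformulas of φ satisfiable in M₀ under the condition Γ augmented at coordinate a by the set Ψ of subformulas of φ satisfiable in M₁ under Γ, and (ii) Ψ. -/
/-- Modal formulas over a set `A` of modality indices. -/
inductive MF (A : Type*) : Type _ where
  | bot : MF A
  | var : ℕ → MF A
  | imp : MF A → MF A → MF A
  | dia : A → MF A → MF A

/-- Truth at `w` under the condition `Γ` in the model `(R, θ)`. -/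
def csat {A W : Type*} (R : A → W → W → Prop) (θ : ℕ → W → Prop)
    (Γ : A → Set (MF A)) : MF A → W → Prop
  | .bot, _ => False
  | .var n, w => θ n w
  | .imp φ ψ, w => csat R θ Γ φ w → csat R θ Γ ψ w
  | .dia a φ, w => φ ∈ Γ a ∨ ∃ v, R a w v ∧ csat R θ Γ φ v

/-- The set of subformulas of a modal formula. -/
def subf {A : Type*} : MF A → Set (MF A)
  | .bot => {.bot}
  | .var n => {.var n}
  | .imp φ ψ => insert (.imp φ ψ) (subf φ ∪ subf ψ)
  | .dia a φ => insert (.dia a φ) (subf φ)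

/-- The subformulas of `φ` satisfiable in the model `(R, θ)` under the condition `Γ`. -/
def satSet {A W : Type*} (R : A → W → W → Prop) (θ : ℕ → W → Prop)
    (Γ : A → Set (MF A)) (φ : MF A) : Set (MF A) :=
  {ψ ∈ subf φ | ∃ v, csat R θ Γ ψ v}

/-- The relations of the sum `M₀ +ᵃ M₁` over the two-element strict order at modality `a`. -/
def plusRel {A W₀ W₁ : Type*} (R₀ : A → W₀ → W₀ → Prop) (R₁ : A → W₁ → W₁ → Prop)
    (a : A) : A → (W₀ ⊕ W₁) → (W₀ ⊕ W₁) → Prop :=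
  fun b x y =>
    match x, y with
    | .inl w, .inl v => R₀ b w v
    | .inr w, .inr v => R₁ b w v
    | .inl _, .inr _ => b = a
    | .inr _, .inl _ => False

/-- The valuation of the sum model. -/
def plusVal {W₀ W₁ : Type*} (θ₀ : ℕ → W₀ → Prop) (θ₁ : ℕ → W₁ → Prop) :
    ℕ → (W₀ ⊕ W₁) → Prop :=
  fun n x => match x with | .inl w => θ₀ n w | .inr v => θ₁ n v

/-- `Γ ∪ᵃ Ψ`: the condition `Γ` augmented at coordinate `a` by the set `Ψ`. -/
def condUnion {A : Type*} (Γ : A → Set (MF A)) (a : A) (Ψ : Set (MF A)) :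
    A → Set (MF A) :=
  fun b => Γ b ∪ {ψ | b = a ∧ ψ ∈ Ψ}

lemma subf_self {A : Type*} (φ : MF A) : φ ∈ subf φ := by
  cases φ with
  | bot => exact rfl
  | var n => exact rfl
  | imp _ _ => exact Or.inl rfl
  | dia _ _ => exact Or.inl rfl

lemma subf_trans {A : Type*} {φ ψ : MF A} (h : ψ ∈ subf φ) : subf ψ ⊆ subf φ := by
  induction φ with
  | bot => simp only [subf] at h; subst h; exact subset_rfl
  | var n => simp only [subf] at h; subst h; exact subset_rfl
  | imp φ₁ φ₂ ih₁ ih₂ =>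
      rcases h with h | h | h
      · subst h; exact subset_rfl
      · exact (ih₁ h).trans (fun x hx => Or.inr (Or.inl hx))
      · exact (ih₂ h).trans (fun x hx => Or.inr (Or.inr hx))
  | dia b φ₁ ih =>
      rcases h with h | h
      · subst h; exact subset_rfl
      · exact (ih h).trans (fun x hx => Or.inr hx)

lemma csat_inr {A W₀ W₁ : Type*} (R₀ : A → W₀ → W₀ → Prop) (θ₀ : ℕ → W₀ → Prop)
    (R₁ : A → W₁ → W₁ → Prop) (θ₁ : ℕ → W₁ → Prop)
    (Γ : A → Set (MF A)) (a : A) (ψ : MF A) (v : W₁) :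
    csat (plusRel R₀ R₁ a) (plusVal θ₀ θ₁) Γ ψ (.inr v) ↔ csat R₁ θ₁ Γ ψ v := by
  induction ψ generalizing v with
  | bot => simp [csat]
  | var n => simp [csat, plusVal]
  | imp φ₁ φ₂ ih₁ ih₂ => simp [csat, ih₁, ih₂]
  | dia b φ₁ ih =>
      simp only [csat]
      constructor
      · rintro (h | ⟨x, hx, hc⟩)
        · exact Or.inl h
        · cases x with
          | inl w => exact absurd hx (by simp [plusRel])
          | inr u => exact Or.inr ⟨u, hx, (ih u).mp hc⟩
      · rintro (h | ⟨u, hu, hc⟩)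
        · exact Or.inl h
        · exact Or.inr ⟨.inr u, hu, (ih u).mpr hc⟩

lemma csat_inl {A W₀ W₁ : Type*} (R₀ : A → W₀ → W₀ → Prop) (θ₀ : ℕ → W₀ → Prop)
    (R₁ : A → W₁ → W₁ → Prop) (θ₁ : ℕ → W₁ → Prop)
    (φ : MF A) (Γ : A → Set (MF A)) (a : A) (ψ : MF A) (hψ : ψ ∈ subf φ) (w : W₀) :
    csat (plusRel R₀ R₁ a) (plusVal θ₀ θ₁) Γ ψ (.inl w) ↔
      csat R₀ θ₀ (condUnion Γ a (satSet R₁ θ₁ Γ φ)) ψ w := by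
  induction ψ generalizing w with
  | bot => simp [csat]
  | var n => simp [csat, plusVal]
  | imp φ₁ φ₂ ih₁ ih₂ =>
      have h₁ : φ₁ ∈ subf φ := subf_trans hψ (Or.inr (Or.inl (subf_self φ₁)))
      have h₂ : φ₂ ∈ subf φ := subf_trans hψ (Or.inr (Or.inr (subf_self φ₂)))
      simp only [csat, ih₁ h₁, ih₂ h₂]
  | dia b φ₁ ih =>
      have h₁ : φ₁ ∈ subf φ := subf_trans hψ (Or.inr (subf_self φ₁))
      simp only [csat]
      constructor
      · rintro (h | ⟨x, hx, hc⟩)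
        · exact Or.inl (Or.inl h)
        · cases x with
          | inl v => exact Or.inr ⟨v, hx, (ih h₁ v).mp hc⟩
          | inr v =>
              refine Or.inl (Or.inr ⟨hx, h₁, v, ?_⟩)
              exact (csat_inr R₀ θ₀ R₁ θ₁ Γ a φ₁ v).mp hc
      · rintro ((h | ⟨hb, _, v, hc⟩) | ⟨v, hv, hc⟩)
        · exact Or.inl h
        · exact Or.inr ⟨.inr v, hb, (csat_inr R₀ θ₀ R₁ θ₁ Γ a φ₁ v).mpr hc⟩
        · exact Or.inr ⟨.inl v, hv, (ih h₁ v).mpr hc⟩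

/-- External condition lemma for two-component sums. -/
theorem stmt_11 {A W₀ W₁ : Type*}
    (R₀ : A → W₀ → W₀ → Prop) (θ₀ : ℕ → W₀ → Prop)
    (R₁ : A → W₁ → W₁ → Prop) (θ₁ : ℕ → W₁ → Prop)
    (φ : MF A) (Γ : A → Set (MF A)) (a : A) :
    satSet (plusRel R₀ R₁ a) (plusVal θ₀ θ₁) Γ φ =
      satSet R₀ θ₀ (condUnion Γ a (satSet R₁ θ₁ Γ φ)) φ ∪ satSet R₁ θ₁ Γ φ := by
  ext ψ
  constructor
  · rintro ⟨hψ, x, hc⟩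
    cases x with
    | inl w => exact Or.inl ⟨hψ, w, (csat_inl R₀ θ₀ R₁ θ₁ φ Γ a ψ hψ w).mp hc⟩
    | inr v => exact Or.inr ⟨hψ, v, (csat_inr R₀ θ₀ R₁ θ₁ Γ a ψ v).mp hc⟩
  · rintro (⟨hψ, w, hc⟩ | ⟨hψ, v, hc⟩)
    · exact ⟨hψ, .inl w, (csat_inl R₀ θ₀ R₁ θ₁ φ Γ a ψ hψ w).mpr hc⟩
    · exact ⟨hψ, .inr v, (csat_inr R₀ θ₀ R₁ θ₁ Γ a ψ v).mpr hc⟩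
end

section
/- Disjoint union decomposition of conditional satisfiability: a tie (φ, Φ, Γ) is satisfiable in the class of disjoint unions of at most b frames from a class G iff there exist 0 < k ≤ b and sets Φ₀,…,Φ_{k−1} ⊆ Sub(φ) with Φ = Φ₀ ∪ … ∪ Φ_{k−1} such that each tie (φ, Φ_i, Γ) is satisfiable in G. -/
universe u

/-- An A-frame: a carrier together with an A-indexed family of binary relations. -/
structure Frame (A : Type) : Type (u + 1) where
  W : Type u
  R : A → W → W → Prop

/-- The tie `(φ, Φ, Γ)` is satisfiable in a class `𝒢` of frames. -/
def TieSat {A : Type} (𝒢 : Set (Frame.{u} A)) (φ : MF A) (Φ : Set (MF A))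
    (Γ : A → Set (MF A)) : Prop :=
  ∃ F ∈ 𝒢, ∃ θ : ℕ → F.W → Prop, Φ = satSet F.R θ Γ φ

/-- The disjoint union of a finite family of frames. -/
def duFrame {A : Type} {k : ℕ} (Fs : Fin k → Frame.{u} A) : Frame.{u} A where
  W := Σ i, (Fs i).W
  R := fun a x y => ∃ h : x.1 = y.1, (Fs y.1).R a (h ▸ x.2) y.2

lemma csat_du {A : Type} {k : ℕ} (Fs : Fin k → Frame.{u} A)
    (θ : ℕ → (duFrame Fs).W → Prop) (Γ : A → Set (MF A)) (ψ : MF A) :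
    ∀ (i : Fin k) (w : (Fs i).W), csat (duFrame Fs).R θ Γ ψ ⟨i, w⟩ ↔
      csat (Fs i).R (fun n v => θ n ⟨i, v⟩) Γ ψ w := by
  induction ψ with
  | bot => intro i w; exact Iff.rfl
  | var n => intro i w; exact Iff.rfl
  | imp χ ψ ihχ ihψ =>
      intro i w
      simp only [csat]
      exact imp_congr (ihχ i w) (ihψ i w)
  | dia a χ ih =>
      intro i w
      simp only [csat]
      constructor
      · rintro (h | ⟨⟨j, u⟩, ⟨hj, hR⟩, hc⟩)
        · exact Or.inl h
        · cases hj
          exact Or.inr ⟨u, hR, (ih _ _).1 hc⟩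
      · rintro (h | ⟨u, hR, hc⟩)
        · exact Or.inl h
        · exact Or.inr ⟨⟨i, u⟩, ⟨rfl, hR⟩, (ih _ _).2 hc⟩

lemma satSet_du {A : Type} {k : ℕ} (Fs : Fin k → Frame.{u} A)
    (θ : ℕ → (duFrame Fs).W → Prop) (Γ : A → Set (MF A)) (φ : MF A) :
    satSet (duFrame Fs).R θ Γ φ =
      ⋃ i, satSet (Fs i).R (fun n v => θ n ⟨i, v⟩) Γ φ := by
  ext ψ
  simp only [satSet, Set.mem_setOf_eq, Set.mem_iUnion]
  constructor
  · rintro ⟨hs, ⟨i, w⟩, hc⟩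
    exact ⟨i, hs, w, (csat_du Fs θ Γ ψ i w).1 hc⟩
  · rintro ⟨i, hs, w, hc⟩
    exact ⟨hs, ⟨i, w⟩, (csat_du Fs θ Γ ψ i w).2 hc⟩

/-- Disjoint union decomposition of conditional satisfiability: a tie `(φ, Φ, Γ)` is
satisfiable in the class of disjoint unions of at most `b` frames from `𝒢` iff `Φ` splits
into `0 < k ≤ b` subsets of `Sub φ` whose ties are each satisfiable in `𝒢`. -/
theorem stmt_12 {A : Type} (𝒢 : Set (Frame.{u} A)) (b : ℕ) (hb : 0 < b)
    (φ : MF A) (Φ : Set (MF A)) (hΦ : Φ ⊆ subf φ) (Γ : A → Set (MF A)) :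
    TieSat {F | ∃ k, 0 < k ∧ k ≤ b ∧
        ∃ Fs : Fin k → Frame.{u} A, (∀ i, Fs i ∈ 𝒢) ∧ F = duFrame Fs} φ Φ Γ ↔
      ∃ k, 0 < k ∧ k ≤ b ∧ ∃ Φs : Fin k → Set (MF A),
        (∀ i, Φs i ⊆ subf φ) ∧ Φ = ⋃ i, Φs i ∧ ∀ i, TieSat 𝒢 φ (Φs i) Γ := by
  constructor
  · rintro ⟨F, ⟨k, hk0, hkb, Fs, hFs, rfl⟩, θ, rfl⟩
    refine ⟨k, hk0, hkb, fun i => satSet (Fs i).R (fun n v => θ n ⟨i, v⟩) Γ φ,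
      fun i ψ hψ => hψ.1, satSet_du Fs θ Γ φ, fun i => ⟨Fs i, hFs i, _, rfl⟩⟩
  · rintro ⟨k, hk0, hkb, Φs, hΦs, rfl, hsat⟩
    choose F hF θ hθ using hsat
    refine ⟨duFrame F, ⟨k, hk0, hkb, F, hF, rfl⟩,
      fun n x => θ x.1 n x.2, ?_⟩
    rw [satSet_du]
    exact Set.iUnion_congr fun i => hθ i
end

section
/- Every frame in the class of a-sums over Noetherian orders of disjoint unions of frames from F is isomorphic to a frame in the class of a-sums over Noetherian orders of frames from F. -/
universe u

/-- A (nonempty) Noetherian order: a strict partial order with no infinite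
ascending chains. -/
def IsNoetherianOrder {I : Type*} (lt : I → I → Prop) : Prop :=
  Nonempty I ∧ (∀ i, ¬ lt i i) ∧ (∀ i j k, lt i j → lt j k → lt i k) ∧
    ¬ ∃ f : ℕ → I, ∀ n, lt (f n) (f (n + 1))

/-- The `a`-sum of A-frames `(F i, R i)` over the unimodal frame `(ι, S)`: the indexing
frame has relation `S` at coordinate `a` and empty relations elsewhere. -/
def aSumRel {A ι : Type*} (S : ι → ι → Prop) (a : A) {F : ι → Type*}
    (R : ∀ i, A → F i → F i → Prop) : A → (Σ i, F i) → (Σ i, F i) → Prop :=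
  fun b x y => (∃ h : x.1 = y.1, R y.1 b (h ▸ x.2) y.2) ∨ (x.1 ≠ y.1 ∧ b = a ∧ S x.1 y.1)

/-- Disjoint union of A-frames: no cross-component relations. -/
def duRelA {A ι : Type*} {F : ι → Type*}
    (R : ∀ i, A → F i → F i → Prop) : A → (Σ i, F i) → (Σ i, F i) → Prop :=
  fun a x y => ∃ h : x.1 = y.1, R y.1 a (h ▸ x.2) y.2

/-- Every `a`-sum over a Noetherian order of disjoint unions of frames from `ℱ` is
isomorphic to an `a`-sum over a Noetherian order of frames from `ℱ`. -/
theorem stmt_17 {A : Type} (a : A) (ℱ : Set (Frame.{u} A))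
    (I : Type u) (S : I → I → Prop) (hS : IsNoetherianOrder S)
    (J : I → Type u) (hJ : ∀ i, Nonempty (J i))
    (Fam : ∀ i, J i → Frame.{u} A) (hFam : ∀ i j, Fam i j ∈ ℱ) :
    ∃ (I' : Type u) (S' : I' → I' → Prop), IsNoetherianOrder S' ∧
      ∃ Fam' : I' → Frame.{u} A, (∀ i', Fam' i' ∈ ℱ) ∧
        ∃ e : (Σ i, Σ j, (Fam i j).W) ≃ (Σ i', (Fam' i').W),
          ∀ b (x y : Σ i, Σ j, (Fam i j).W),
            aSumRel S a (fun i => duRelA (fun j => (Fam i j).R)) b x y ↔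
              aSumRel S' a (fun i' => (Fam' i').R) b (e x) (e y) := by
  obtain ⟨⟨i0⟩, hirr, htrans, hchain⟩ := hS
  refine ⟨Σ i, J i, fun p q => S p.1 q.1, ⟨⟨⟨i0, (hJ i0).some⟩⟩, fun p => hirr p.1,
    fun p q r => htrans p.1 q.1 r.1, fun ⟨f, hf⟩ => hchain ⟨fun n => (f n).1, hf⟩⟩,
    fun p => Fam p.1 p.2, fun p => hFam p.1 p.2,
    (Equiv.sigmaAssoc (fun i j => (Fam i j).W)).symm, ?_⟩
  rintro b ⟨i, j, w⟩ ⟨i', j', w'⟩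
  simp only [Equiv.sigmaAssoc, Equiv.coe_fn_symm_mk]
  constructor
  · rintro (⟨h1, h2⟩ | ⟨hne, rfl, hs⟩)
    · replace h1 : i = i' := h1
      cases h1
      obtain ⟨h3, h4⟩ := h2
      replace h3 : j = j' := h3
      cases h3
      exact Or.inl ⟨rfl, h4⟩
    · refine Or.inr ⟨?_, rfl, hs⟩
      intro h
      exact hne (congrArg (Sigma.fst (β := J)) h)
  · rintro (⟨h, hr⟩ | ⟨hne, rfl, hs⟩)
    · obtain ⟨h1, h2⟩ := Sigma.mk.inj_iff.mp (show (⟨i,j⟩ : Σ i, J i) = ⟨i',j'⟩ from h)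
      cases h1
      cases eq_of_heq h2
      exact Or.inl ⟨rfl, ⟨rfl, hr⟩⟩
    · rcases eq_or_ne i i' with rfl | hii
      · exact absurd hs (hirr i)
      · exact Or.inr ⟨hii, rfl, hs⟩
end
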